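/- arXiv:1311.0495 — 2 statements merged into one kernel-verified Lean document; each statement's English description precedes it below -/
import Mathlib

section
/- Let u : ℝ² → ℝ be a C⁴ function of (x,t) and let z ∈ ℂ with z ≠ 0. Then at every point (x,t) the zero-curvature equation ∂ₜA(x,t,z) − ∂ₓB(x,t,z) + A(x,t,z)·B(x,t,z) − B(x,t,z)·A(x,t,z) = 0 holds if and only if u_{txx}(x,t) − 3u_x(x,t) + 3u_x(x,t)u_{xx}(x,t) + u(x,t)u_{xxx}(x,t) = 0. In other words, the first-order 3×3 matrix Lax pair Φ_x = AΦ, Φ_t = BΦ is compatible precisely when u solves the Ostrovsky–Vakhnenko (short-wave Degasperis–Procesi) equation with κ = 1. -/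
/-!
Both `A` and `B` depend on `x` only through `u`, `u_x`, `u_{xx}`, so `∂ₜA − ∂ₓB + [A, B]` is an
explicit polynomial in `z³, z⁻³` and the derivatives of `u`. Multiplying it out, every entry
cancels except the bottom-left one, which equals `−z³` times the Ostrovsky–Vakhnenko residual;
as `z ≠ 0` the two equations are equivalent. The `C⁴` hypothesis is what makes the iterated
`deriv`s in the statement genuine partial derivatives of one another.
-/

open Matrix

noncomputable section

/-- Partial derivative of `u` in the first (space) variable. -/
def ux (u : ℝ → ℝ → ℝ) (x t : ℝ) : ℝ := deriv (fun x' => u x' t) x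

/-- Second partial derivative of `u` in the space variable. -/
def uxx (u : ℝ → ℝ → ℝ) (x t : ℝ) : ℝ := deriv (fun x' => ux u x' t) x

/-- Third partial derivative of `u` in the space variable. -/
def uxxx (u : ℝ → ℝ → ℝ) (x t : ℝ) : ℝ := deriv (fun x' => uxx u x' t) x

/-- Mixed partial derivative `u_{txx} = ∂ₜ(u_{xx})`. -/
def utxx (u : ℝ → ℝ → ℝ) (x t : ℝ) : ℝ := deriv (fun t' => uxx u x t') t

/-- The matrix `A(x,t,z)` of the first-order 3×3 Lax pair. -/
def Amat (u : ℝ → ℝ → ℝ) (z : ℂ) (x t : ℝ) : Matrix (Fin 3) (Fin 3) ℂ :=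
  !![0, 1, 0;
     0, 0, 1;
     z ^ 3 * (1 - (uxx u x t : ℂ)), 0, 0]

/-- The matrix `B(x,t,z)` of the first-order 3×3 Lax pair. -/
def Bmat (u : ℝ → ℝ → ℝ) (z : ℂ) (x t : ℝ) : Matrix (Fin 3) (Fin 3) ℂ :=
  !![(ux u x t : ℂ), -(u x t : ℂ), z⁻¹ ^ 3;
     1, 0, -(u x t : ℂ);
     -z ^ 3 * (u x t : ℂ) * (1 - (uxx u x t : ℂ)), 1, -(ux u x t : ℂ)]

/-- Entrywise partial derivative of a matrix-valued function in the time variable. -/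
def Tderiv (M : ℝ → ℝ → Matrix (Fin 3) (Fin 3) ℂ) (x t : ℝ) : Matrix (Fin 3) (Fin 3) ℂ :=
  Matrix.of fun i j => deriv (fun t' => M x t' i j) t

/-- Entrywise partial derivative of a matrix-valued function in the space variable. -/
def Xderiv (M : ℝ → ℝ → Matrix (Fin 3) (Fin 3) ℂ) (x t : ℝ) : Matrix (Fin 3) (Fin 3) ℂ :=
  Matrix.of fun i j => deriv (fun x' => M x' t i j) x

open Function

theorem Matrix.single_eq_zero_iff {m n α : Type*} [DecidableEq m] [DecidableEq n] [Zero α]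
    {i : m} {j : n} {c : α} : single i j c = 0 ↔ c = 0 :=
  ⟨fun h => by simpa using congrFun₂ h i j, fun h => h ▸ single_zero i j⟩

section PartialDerivatives

variable {E : Type*} [NormedAddCommGroup E] [NormedSpace ℝ E] {f : ℝ → ℝ → E}

theorem hasDerivAt_deriv_fst (hf : Differentiable ℝ (uncurry f)) (x t : ℝ) :
    HasDerivAt (fun x' => f x' t) (deriv (fun x' => f x' t) x) x :=
  DifferentiableAt.hasDerivAt <|
    (hf (x, t)).comp (f := fun x' => (x', t)) x
      (differentiableAt_id.prodMk (differentiableAt_const t))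

theorem hasDerivAt_deriv_snd (hf : Differentiable ℝ (uncurry f)) (x t : ℝ) :
    HasDerivAt (fun t' => f x t') (deriv (fun t' => f x t') t) t :=
  DifferentiableAt.hasDerivAt <|
    (hf (x, t)).comp (f := fun t' => (x, t')) t
      ((differentiableAt_const x).prodMk differentiableAt_id)

end PartialDerivatives

theorem contDiff_uncurry_ux {u : ℝ → ℝ → ℝ} {m n : WithTop ℕ∞}
    (hu : ContDiff ℝ n (uncurry u)) (hmn : m + 1 ≤ n) : ContDiff ℝ m (uncurry (ux u)) := by
  have hdiff : Differentiable ℝ (uncurry u) :=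
    hu.differentiable (zero_lt_one.trans_le (le_add_self.trans hmn)).ne'
  have hfderiv : uncurry (ux u) = fun p => fderiv ℝ (uncurry u) p (1, 0) := by
    funext p
    exact ((hdiff p).hasFDerivAt.comp_hasDerivAt p.1
      ((hasDerivAt_id p.1).prodMk (hasDerivAt_const p.1 p.2))).deriv
  rw [hfderiv]
  exact (hu.fderiv_right hmn).clm_apply contDiff_const

section LaxPair

variable {u : ℝ → ℝ → ℝ} {z : ℂ} {x t : ℝ}

theorem tderiv_Amat (h : HasDerivAt (fun t' => uxx u x t') (utxx u x t) t) :
    Tderiv (Amat u z) x t = Matrix.single 2 0 (-(z ^ 3 * utxx u x t)) := by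
  ext i j
  fin_cases i <;> fin_cases j <;> simp [Tderiv, Amat, h.ofReal_comp.deriv]

theorem xderiv_Bmat (h₀ : HasDerivAt (fun x' => u x' t) (ux u x t) x)
    (h₁ : HasDerivAt (fun x' => ux u x' t) (uxx u x t) x)
    (h₂ : HasDerivAt (fun x' => uxx u x' t) (uxxx u x t) x) :
    Xderiv (Bmat u z) x t =
      !![(uxx u x t : ℂ), -(ux u x t : ℂ), 0;
         0, 0, -(ux u x t : ℂ);
         -z ^ 3 * ((ux u x t : ℂ) * (1 - uxx u x t) - u x t * uxxx u x t), 0, -(uxx u x t : ℂ)] := by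
  have h₂₀ := ((h₀.ofReal_comp.const_mul (z ^ 3)).fun_mul (h₂.ofReal_comp.const_sub 1)).deriv
  ext i j
  fin_cases i <;> fin_cases j <;>
    simp [Xderiv, Bmat, h₀.ofReal_comp.deriv, h₁.ofReal_comp.deriv, h₂₀]
  ring

theorem zeroCurvature_eq_single (hz : z ≠ 0)
    (h₀ : HasDerivAt (fun x' => u x' t) (ux u x t) x)
    (h₁ : HasDerivAt (fun x' => ux u x' t) (uxx u x t) x)
    (h₂ : HasDerivAt (fun x' => uxx u x' t) (uxxx u x t) x)
    (h₃ : HasDerivAt (fun t' => uxx u x t') (utxx u x t) t) :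
    Tderiv (Amat u z) x t - Xderiv (Bmat u z) x t
        + Amat u z x t * Bmat u z x t - Bmat u z x t * Amat u z x t
      = Matrix.single 2 0 (-(z ^ 3 * ↑(utxx u x t - 3 * ux u x t + 3 * ux u x t * uxx u x t
          + u x t * uxxx u x t))) := by
  rw [tderiv_Amat h₃, xderiv_Bmat h₀ h₁ h₂]
  ext i j
  fin_cases i <;> fin_cases j <;> simp [Amat, Bmat] <;> field_simp <;> ring

end LaxPair

/-- The zero-curvature equation `∂ₜA − ∂ₓB + AB − BA = 0` for the first-order 3×3
Lax pair holds at `(x,t)` if and only if `u` satisfies the Ostrovsky–Vakhnenko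
(short-wave Degasperis–Procesi) equation with `κ = 1` at `(x,t)`. -/
theorem zero_curvature_iff_OV (u : ℝ → ℝ → ℝ)
    (hu : ContDiff ℝ 4 (fun p : ℝ × ℝ => u p.1 p.2))
    (z : ℂ) (hz : z ≠ 0) :
    ∀ x t : ℝ,
      Tderiv (Amat u z) x t - Xderiv (Bmat u z) x t
        + Amat u z x t * Bmat u z x t - Bmat u z x t * Amat u z x t = 0
      ↔ utxx u x t - 3 * ux u x t + 3 * ux u x t * uxx u x t
          + u x t * uxxx u x t = 0 := by
  intro x t
  have hux : ContDiff ℝ 3 (uncurry (ux u)) := contDiff_uncurry_ux hu (by norm_num)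
  have huxx : ContDiff ℝ 2 (uncurry (uxx u)) := contDiff_uncurry_ux hux (by norm_num)
  have hdu : Differentiable ℝ (uncurry u) := hu.differentiable (by norm_num)
  have hdux : Differentiable ℝ (uncurry (ux u)) := hux.differentiable (by norm_num)
  have hduxx : Differentiable ℝ (uncurry (uxx u)) := huxx.differentiable (by norm_num)
  rw [zeroCurvature_eq_single hz (hasDerivAt_deriv_fst hdu x t) (hasDerivAt_deriv_fst hdux x t)
    (hasDerivAt_deriv_fst hduxx x t) (hasDerivAt_deriv_snd hduxx x t),
    Matrix.single_eq_zero_iff, neg_eq_zero, mul_eq_zero, Complex.ofReal_eq_zero]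
  exact or_iff_right (pow_ne_zero 3 hz)

end
end

section
/- (Conjugation symmetry of the Lax pair coefficients, underlying Proposition 2.6 (S1).) Let Γ₁ be the 3×3 permutation matrix [[0,1,0],[1,0,0],[0,0,1]], let ω = e^{2πi/3}, and let q > 0, q_x, u be real numbers with z ∈ ℂ, z ≠ 0. Form U from the values q, q_x and V(z) from the values q, q_x, u (as in the first 3×3 Lax pair). Then Γ₁·conj(q·Λ(conj(z)) + U)·Γ₁ = q·Λ(z) + U and Γ₁·conj(−u q·Λ(conj(z)) + Λ(conj(z))^{−1} + V(conj(z)))·Γ₁ = −u q·Λ(z) + Λ(z)^{−1} + V(z), where conj applied to a matrix means entrywise complex conjugation. -/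
open Matrix

noncomputable section

/-- `ω = e^{2πi/3}`, a primitive cube root of unity. -/
def ω : ℂ := Complex.exp (2 * Real.pi * Complex.I / 3)

/-- `Λ(z) = z·diag(ω, ω², 1)`. -/
def Lam (z : ℂ) : Matrix (Fin 3) (Fin 3) ℂ :=
  z • Matrix.diagonal ![ω, ω ^ 2, 1]

/-- The matrix `U` built from the values `q` and `q_x`. -/
def Umat (q qx : ℝ) : Matrix (Fin 3) (Fin 3) ℂ :=
  ((qx / (3 * q) : ℝ) : ℂ) •
    !![0, 1 - ω ^ 2, 1 - ω;
       1 - ω, 0, 1 - ω ^ 2;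
       1 - ω ^ 2, 1 - ω, 0]

/-- The matrix `V(z)` built from the values `q`, `q_x` and `u`. -/
def Vmat (q qx u : ℝ) (z : ℂ) : Matrix (Fin 3) (Fin 3) ℂ :=
  (-(u : ℂ)) • Umat q qx +
    (1 / (3 * z)) •
      ((((3 * (1 / q - 1) : ℝ) : ℂ) • (1 : Matrix (Fin 3) (Fin 3) ℂ) +
          ((q ^ 2 - 1 / q : ℝ) : ℂ) • (!![1, 1, 1; 1, 1, 1; 1, 1, 1] : Matrix (Fin 3) (Fin 3) ℂ)) *
        Matrix.diagonal ![ω ^ 2, ω, 1])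

/-- The permutation matrix `Γ₁`. -/
def Gamma1 : Matrix (Fin 3) (Fin 3) ℂ :=
  !![0, 1, 0;
     1, 0, 0;
     0, 0, 1]

/-- Entrywise complex conjugation of a matrix. -/
def mconj (M : Matrix (Fin 3) (Fin 3) ℂ) : Matrix (Fin 3) (Fin 3) ℂ :=
  M.map (starRingEnd ℂ)

/-! The map `M ↦ Γ₁ · conj(M) · Γ₁` is entrywise conjugation followed by swapping the first two
indices, so it is additive, multiplicative, commutes with matrix inversion and conjugates scalars.
Because `conj ω = ω²`, it fixes `diag(ω, ω², 1)`, `diag(ω², ω, 1)`, `I`, `J` and the constant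
matrix in `U`. Hence it maps `Λ(z̄)`, `U` and `V(z̄)` to `Λ(z)`, `U` and `V(z)`, and both identities
follow term by term. -/

lemma ω_cube : ω ^ 3 = 1 := by
  rw [ω, ← Complex.exp_nat_mul, ← Complex.exp_two_pi_mul_I]
  ring_nf

lemma norm_ω : ‖ω‖ = 1 := by
  rw [ω, Complex.norm_exp]; simp

lemma conj_ω : starRingEnd ℂ ω = ω ^ 2 := by
  have hω : ω ≠ 0 := norm_ne_zero_iff.mp (by rw [norm_ω]; exact one_ne_zero)
  refine mul_right_cancel₀ hω ?_
  rw [Complex.conj_mul', norm_ω, ← pow_succ, ω_cube]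
  simp

lemma conj_ω_sq : starRingEnd ℂ (ω ^ 2) = ω := by
  rw [map_pow, conj_ω, ← pow_mul]
  linear_combination ω * ω_cube

section mconj

variable (M N : Matrix (Fin 3) (Fin 3) ℂ)

lemma mconj_add : mconj (M + N) = mconj M + mconj N :=
  Matrix.map_add _ (map_add _) M N

lemma mconj_smul (c : ℂ) : mconj (c • M) = starRingEnd ℂ c • mconj M :=
  Matrix.map_smul' _ c M (map_mul _)

lemma mconj_mul : mconj (M * N) = mconj M * mconj N :=
  Matrix.map_mul

lemma mconj_inv : mconj M⁻¹ = (mconj M)⁻¹ := by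
  change M⁻¹ᴴᵀ = Mᴴᵀ⁻¹
  rw [conjTranspose_nonsing_inv, transpose_nonsing_inv]

end mconj

def gammaConj (M : Matrix (Fin 3) (Fin 3) ℂ) : Matrix (Fin 3) (Fin 3) ℂ :=
  Gamma1 * mconj M * Gamma1

local notation "σ" => Equiv.swap (0 : Fin 3) 1

lemma gammaConj_eq_submatrix (M : Matrix (Fin 3) (Fin 3) ℂ) :
    gammaConj M = (mconj M).submatrix σ σ := by
  ext i j
  fin_cases i <;> fin_cases j <;>
    simp [gammaConj, Gamma1, Matrix.mul_apply, vecMul, dotProduct, Fin.sum_univ_three,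
      Equiv.swap_apply_def]

section gammaConj

variable (M N : Matrix (Fin 3) (Fin 3) ℂ)

lemma gammaConj_add : gammaConj (M + N) = gammaConj M + gammaConj N := by
  simp only [gammaConj, mconj_add, Matrix.mul_add, Matrix.add_mul]

lemma gammaConj_smul (c : ℂ) : gammaConj (c • M) = starRingEnd ℂ c • gammaConj M := by
  simp only [gammaConj, mconj_smul, Matrix.mul_smul, Matrix.smul_mul]

lemma gammaConj_mul : gammaConj (M * N) = gammaConj M * gammaConj N := by
  simp only [gammaConj_eq_submatrix, mconj_mul, submatrix_mul_equiv]

lemma gammaConj_inv : gammaConj M⁻¹ = (gammaConj M)⁻¹ := by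
  simp only [gammaConj_eq_submatrix, mconj_inv, inv_submatrix_equiv]

end gammaConj

lemma gammaConj_diagonal (a b c : ℂ) :
    gammaConj (diagonal ![a, b, c]) =
      diagonal ![starRingEnd ℂ b, starRingEnd ℂ a, starRingEnd ℂ c] := by
  ext i j
  fin_cases i <;> fin_cases j <;> simp [gammaConj_eq_submatrix, mconj, Equiv.swap_apply_def]

lemma gammaConj_Lam (z : ℂ) : gammaConj (Lam (starRingEnd ℂ z)) = Lam z := by
  rw [Lam, gammaConj_smul, gammaConj_diagonal, Complex.conj_conj, conj_ω, conj_ω_sq, map_one]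
  rfl

lemma gammaConj_Umat (q qx : ℝ) : gammaConj (Umat q qx) = Umat q qx := by
  rw [Umat, gammaConj_smul, Complex.conj_ofReal]
  congr 1
  ext i j
  fin_cases i <;> fin_cases j <;>
    simp [gammaConj_eq_submatrix, mconj, Equiv.swap_apply_def, conj_ω, conj_ω_sq]

lemma gammaConj_one : gammaConj 1 = 1 := by
  rw [gammaConj_eq_submatrix, mconj, Matrix.map_one _ (map_zero _) (map_one _), submatrix_one_equiv]

lemma gammaConj_all_ones :
    gammaConj !![1, 1, 1; 1, 1, 1; 1, 1, 1] = !![1, 1, 1; 1, 1, 1; 1, 1, 1] := by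
  ext i j
  fin_cases i <;> fin_cases j <;> simp [gammaConj_eq_submatrix, mconj, Equiv.swap_apply_def]

lemma gammaConj_Vmat (q qx u : ℝ) (z : ℂ) :
    gammaConj (Vmat q qx u (starRingEnd ℂ z)) = Vmat q qx u z := by
  simp only [Vmat, gammaConj_add, gammaConj_smul, gammaConj_mul, gammaConj_one, gammaConj_all_ones,
    gammaConj_diagonal, gammaConj_Umat, conj_ω, conj_ω_sq, map_one, map_neg, map_div₀, map_mul,
    map_ofNat, Complex.conj_conj, Complex.conj_ofReal]

theorem conj_symmetry_general (q qx u : ℝ) (z : ℂ) :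
    Gamma1 * mconj ((q : ℂ) • Lam ((starRingEnd ℂ) z) + Umat q qx) * Gamma1
      = (q : ℂ) • Lam z + Umat q qx ∧
    Gamma1 *
        mconj ((-((u : ℂ) * (q : ℂ))) • Lam ((starRingEnd ℂ) z) +
          (Lam ((starRingEnd ℂ) z))⁻¹ + Vmat q qx u ((starRingEnd ℂ) z)) * Gamma1
      = (-((u : ℂ) * (q : ℂ))) • Lam z + (Lam z)⁻¹ + Vmat q qx u z := by
  refine ⟨?_, ?_⟩ <;> change gammaConj _ = _ <;>
    simp only [gammaConj_add, gammaConj_smul, gammaConj_inv, gammaConj_Lam, gammaConj_Umat,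
      gammaConj_Vmat, map_neg, map_mul, Complex.conj_ofReal]

/-- **Conjugation symmetry of the Lax pair coefficients (underlying Proposition 2.6 (S1)).**
`Γ₁·conj(qΛ(conj z) + U)·Γ₁ = qΛ(z) + U` and
`Γ₁·conj(−uqΛ(conj z) + Λ(conj z)⁻¹ + V(conj z))·Γ₁ = −uqΛ(z) + Λ(z)⁻¹ + V(z)`. -/
theorem conj_symmetry (q qx u : ℝ) (hq : 0 < q) (z : ℂ) (hz : z ≠ 0) :
    Gamma1 * mconj ((q : ℂ) • Lam ((starRingEnd ℂ) z) + Umat q qx) * Gamma1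
      = (q : ℂ) • Lam z + Umat q qx ∧
    Gamma1 *
        mconj ((-((u : ℂ) * (q : ℂ))) • Lam ((starRingEnd ℂ) z) +
          (Lam ((starRingEnd ℂ) z))⁻¹ + Vmat q qx u ((starRingEnd ℂ) z)) * Gamma1
      = (-((u : ℂ) * (q : ℂ))) • Lam z + (Lam z)⁻¹ + Vmat q qx u z :=
  conj_symmetry_general q qx u z

end
end
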